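/- Let P be an n×n symmetric positive definite matrix and B ∈ ℝ^{m×n} with rank(B) = r. Then the symmetric projection P^{1/2}XP^{1/2}, with X = P⁻¹ − P⁻¹Bᵀ(BP⁻¹Bᵀ)⁺BP⁻¹, has exactly n − r eigenvalues equal to 1 and r eigenvalues equal to 0. -/

import Mathlib

/-!
Write `S = P^{1/2}` and `C = B S⁻¹`. Since `S P⁻¹ = S⁻¹ = P⁻¹ S`, the matrix `S X S` equals
`1 - Q` with `Q = Cᵀ Ep C`, and `B P⁻¹ Bᵀ = C Cᵀ`. The Penrose identities for `Ep` then make `Q`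
idempotent, and `rank Q = rank C = rank B` because `rank (C Cᵀ) = rank C` over `ℝ`. An idempotent
is the identity on its range and zero on its kernel, so the characteristic polynomial of `1 - Q`
is `X ^ r * (X - 1) ^ (n - r)`.
-/

open Matrix Polynomial Module

open scoped ComplexOrder in
noncomputable def Matrix.PosSemidef.sqrt {n : Type*} [Fintype n] [DecidableEq n]
    {𝕜 : Type*} [RCLike 𝕜] {A : Matrix n n 𝕜} (hA : A.PosSemidef) : Matrix n n 𝕜 :=
  hA.1.eigenvectorUnitary.1 * diagonal ((↑) ∘ (√·) ∘ hA.1.eigenvalues) *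
    (star hA.1.eigenvectorUnitary : Matrix n n 𝕜)

namespace Matrix.PosSemidef

open scoped ComplexOrder

variable {n 𝕜 : Type*} [Fintype n] [DecidableEq n] [RCLike 𝕜] {A : Matrix n n 𝕜}

lemma sqrt_mul_self (hA : A.PosSemidef) : hA.sqrt * hA.sqrt = A := by
  set U : Matrix n n 𝕜 := hA.1.eigenvectorUnitary.1
  set D : Matrix n n 𝕜 := diagonal ((↑) ∘ (√·) ∘ hA.1.eigenvalues)
  have hU : star U * U = 1 := Unitary.coe_star_mul_self hA.1.eigenvectorUnitary
  have hD : D * D = diagonal ((↑) ∘ hA.1.eigenvalues) := by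
    rw [diagonal_mul_diagonal]
    congr 1 with i
    simp [← RCLike.ofReal_mul, Real.mul_self_sqrt (hA.eigenvalues_nonneg i)]
  calc hA.sqrt * hA.sqrt = U * (D * (star U * U) * D) * star U := by
        simp only [PosSemidef.sqrt, U, D, Matrix.mul_assoc]
    _ = A := by
        rw [hU, Matrix.mul_one, hD]
        conv_rhs => rw [hA.1.spectral_theorem, Unitary.conjStarAlgAut_apply]

lemma isHermitian_sqrt (hA : A.PosSemidef) : hA.sqrt.IsHermitian := by
  rw [PosSemidef.sqrt, star_eq_conjTranspose]
  exact isHermitian_mul_mul_conjTranspose _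
    (isHermitian_diagonal_iff.mpr fun _ ↦ RCLike.conj_ofReal _)

end Matrix.PosSemidef

lemma LinearMap.charpoly_of_isIdempotentElem {K V : Type*} [Field K] [AddCommGroup V]
    [Module K V] [FiniteDimensional K V] {f : Module.End K V} (hf : IsIdempotentElem f) :
    f.charpoly = X ^ finrank K (ker f) * (X - 1) ^ finrank K (range f) := by
  have hproj : IsProj (range f) f := ⟨fun x ↦ mem_range_self f x,
    fun x ⟨y, hy⟩ ↦ by rw [← hy, ← Module.End.mul_apply, hf.eq]⟩
  conv_lhs => rw [hproj.eq_conj_prodMap]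
  rw [LinearEquiv.charpoly_conj, charpoly_prodMap, ← Module.End.one_eq_id,
    charpoly_one, charpoly_zero, mul_comm]

lemma Matrix.charpoly_one_sub_of_isIdempotentElem {n K : Type*} [Fintype n] [DecidableEq n]
    [Field K] {Q : Matrix n n K} (hQ : IsIdempotentElem Q) :
    (1 - Q).charpoly = X ^ Q.rank * (X - 1) ^ (Fintype.card n - Q.rank) := by
  have hf : IsIdempotentElem (toLin' Q) := by
    rw [IsIdempotentElem, Module.End.mul_eq_comp, ← toLin'_mul, hQ.eq]
  have hrange : finrank K (LinearMap.range (toLin' Q)) = Q.rank := by rw [toLin'_apply', rank]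
  have hker : finrank K (LinearMap.ker (toLin' Q)) = Fintype.card n - Q.rank := by
    have := LinearMap.finrank_range_add_finrank_ker (toLin' Q)
    rw [finrank_fintype_fun_eq_card] at this
    omega
  rw [← charpoly_toLin', map_sub, toLin'_one, ← Module.End.one_eq_id,
    LinearMap.charpoly_of_isIdempotentElem hf.one_sub,
    ← LinearMap.IsIdempotentElem.range_eq_ker_one_sub hf,
    ← LinearMap.IsIdempotentElem.ker_eq_range_one_sub hf, hrange, hker]

section Projection

variable {m n : Type*} [Fintype m] [Fintype n]

lemma Matrix.isIdempotentElem_transpose_mul_mul {R : Type*} [Semiring R] {C : Matrix m n R}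
    {G : Matrix m m R} (hG : G * (C * Cᵀ) * G = G) : IsIdempotentElem (Cᵀ * G * C) := by
  calc Cᵀ * G * C * (Cᵀ * G * C) = Cᵀ * (G * (C * Cᵀ) * G) * C := by simp only [Matrix.mul_assoc]
    _ = Cᵀ * G * C := by rw [hG]

lemma Matrix.rank_transpose_mul_mul {K : Type*} [Field K] [LinearOrder K] [IsStrictOrderedRing K]
    {C : Matrix m n K} {G : Matrix m m K} (hG : C * Cᵀ * G * (C * Cᵀ) = C * Cᵀ) :
    (Cᵀ * G * C).rank = C.rank := by
  refine le_antisymm (rank_mul_le_right _ _) ?_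
  calc C.rank = (C * Cᵀ * G * (C * Cᵀ)).rank := by rw [hG, rank_self_mul_transpose]
    _ = (C * (Cᵀ * G * C) * Cᵀ).rank := by simp only [Matrix.mul_assoc]
    _ ≤ (C * (Cᵀ * G * C)).rank := rank_mul_le_left _ _
    _ ≤ (Cᵀ * G * C).rank := rank_mul_le_right _ _

end Projection

section SqrtCongruence

variable {m n K : Type*} [Fintype n] [DecidableEq n] [CommRing K] {S P : Matrix n n K}

lemma Matrix.mul_inv_transpose_eq_of_mul_self_eq (hSt : Sᵀ = S) (hSS : S * S = P)
    (B : Matrix m n K) :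
    B * P⁻¹ * Bᵀ = B * S⁻¹ * (B * S⁻¹)ᵀ := by
  rw [← hSS, Matrix.mul_inv_rev, transpose_mul, transpose_nonsing_inv, hSt]
  simp only [Matrix.mul_assoc]

lemma Matrix.mul_sub_inv_mul_eq_one_sub_of_mul_self_eq [Fintype m] (hSt : Sᵀ = S)
    (hSS : S * S = P) (hS : IsUnit S.det) (B : Matrix m n K) (G : Matrix m m K) :
    S * (P⁻¹ - P⁻¹ * Bᵀ * G * B * P⁻¹) * S = 1 - (B * S⁻¹)ᵀ * G * (B * S⁻¹) := by
  have hSP : S * P⁻¹ = S⁻¹ := by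
    rw [← hSS, Matrix.mul_inv_rev, ← Matrix.mul_assoc, mul_nonsing_inv _ hS, Matrix.one_mul]
  have hPS : P⁻¹ * S = S⁻¹ := by
    rw [← hSS, Matrix.mul_inv_rev, Matrix.mul_assoc, nonsing_inv_mul _ hS, Matrix.mul_one]
  rw [transpose_mul, transpose_nonsing_inv, hSt, Matrix.mul_sub, Matrix.sub_mul, hSP,
    nonsing_inv_mul _ hS]
  simp only [← Matrix.mul_assoc, hSP]
  simp only [Matrix.mul_assoc, hPS]

end SqrtCongruence

theorem sqrtX_eigs_general {m n : ℕ}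
    (P : Matrix (Fin n) (Fin n) ℝ) (hP : P.PosDef)
    (B : Matrix (Fin m) (Fin n) ℝ)
    (Ep : Matrix (Fin m) (Fin m) ℝ)
    (h1 : (B * P⁻¹ * Bᵀ) * Ep * (B * P⁻¹ * Bᵀ) = B * P⁻¹ * Bᵀ)
    (h2 : Ep * (B * P⁻¹ * Bᵀ) * Ep = Ep)
    (X' : Matrix (Fin n) (Fin n) ℝ)
    (hX : X' = P⁻¹ - P⁻¹ * Bᵀ * Ep * B * P⁻¹)
    (R : Matrix (Fin n) (Fin n) ℝ) (hR : R = hP.posSemidef.sqrt)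
    (r : ℕ) (hr : r = B.rank) :
    (R * X' * R).charpoly = X ^ r * (X - 1) ^ (n - r) := by
  have hRR : R * R = P := hR ▸ hP.posSemidef.sqrt_mul_self
  have hRt : Rᵀ = R := by
    simpa [IsHermitian, conjTranspose_eq_transpose_of_trivial, ← hR]
      using hP.posSemidef.isHermitian_sqrt
  have hdet : IsUnit R.det := by
    have hP' : IsUnit (R * R).det := hRR ▸ (isUnit_iff_isUnit_det P).mp hP.isUnit
    exact isUnit_of_mul_isUnit_left (det_mul R R ▸ hP')
  rw [mul_inv_transpose_eq_of_mul_self_eq hRt hRR] at h1 h2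
  rw [hX, mul_sub_inv_mul_eq_one_sub_of_mul_self_eq hRt hRR hdet,
    charpoly_one_sub_of_isIdempotentElem (isIdempotentElem_transpose_mul_mul h2),
    rank_transpose_mul_mul h1, rank_mul_eq_left_of_isUnit_det _ _ (isUnit_nonsing_inv_det _ hdet),
    Fintype.card_fin, hr]

theorem sqrtX_eigs {m n : ℕ}
    (P : Matrix (Fin n) (Fin n) ℝ) (hP : P.PosDef)
    (B : Matrix (Fin m) (Fin n) ℝ)
    (Ep : Matrix (Fin m) (Fin m) ℝ)
    (h1 : (B * P⁻¹ * Bᵀ) * Ep * (B * P⁻¹ * Bᵀ) = B * P⁻¹ * Bᵀ)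
    (h2 : Ep * (B * P⁻¹ * Bᵀ) * Ep = Ep)
    (h3 : ((B * P⁻¹ * Bᵀ) * Ep)ᵀ = (B * P⁻¹ * Bᵀ) * Ep)
    (h4 : (Ep * (B * P⁻¹ * Bᵀ))ᵀ = Ep * (B * P⁻¹ * Bᵀ))
    (X' : Matrix (Fin n) (Fin n) ℝ)
    (hX : X' = P⁻¹ - P⁻¹ * Bᵀ * Ep * B * P⁻¹)
    (R : Matrix (Fin n) (Fin n) ℝ) (hR : R = hP.posSemidef.sqrt)
    (r : ℕ) (hr : r = B.rank) :
    (R * X' * R).charpoly = X ^ r * (X - 1) ^ (n - r) :=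
  sqrtX_eigs_general P hP B Ep h1 h2 X' hX R hR r hr
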